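/- arXiv:2307.02158 — 3 statements merged into one kernel-verified Lean document; each statement's English description precedes it below -/
import Mathlib

section
/- Let f: ℝ → ℝ be continuous and odd with f(s)/s strictly increasing for s > 0. Then for any u ∈ H¹(ℝᵈ) \ {0}, the function h(s) = S(su) (where S(v) = ½‖v‖²_{H¹} − ∫ F(v) dx, F(t) = ∫₀^t f) has at most one critical point on (0,∞); equivalently, the Nehari functional I(su) = s²‖u‖²_{H¹} − ∫ f(su)·su dx can vanish at most once for s ∈ (0,∞). -/
open MeasureTheory Real Set Filter

noncomputable section

/-- Euclidean space `ℝᵈ`. -/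
abbrev E (d : ℕ) := EuclideanSpace ℝ (Fin d)

/-- `‖∇u(x)‖²`. -/
noncomputable def gradSq {d : ℕ} (u : E d → ℝ) (x : E d) : ℝ := ‖gradient u x‖ ^ 2

/-- Squared `H¹` norm: `‖∇u‖²_{L²} + ‖u‖²_{L²}`. -/
noncomputable def H1normSq {d : ℕ} (u : E d → ℝ) : ℝ :=
  (∫ x, gradSq u x) + ∫ x, (u x) ^ 2

/-- Primitive `F(t) = ∫₀ᵗ f(s) ds`. -/
noncomputable def Fprim (f : ℝ → ℝ) (t : ℝ) : ℝ := ∫ s in (0:ℝ)..t, f s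

/-- Action `S(u) = ½‖∇u‖²_{L²} + ½‖u‖²_{L²} - ∫ F(u)`. -/
noncomputable def Sfun {d : ℕ} (f : ℝ → ℝ) (u : E d → ℝ) : ℝ :=
  (1 / 2) * H1normSq u - ∫ x, Fprim f (u x)

/-- Nehari functional `I(u) = ‖∇u‖²_{L²} + ‖u‖²_{L²} - ∫ f(u)u`. -/
noncomputable def Ifun {d : ℕ} (f : ℝ → ℝ) (u : E d → ℝ) : ℝ :=
  H1normSq u - ∫ x, f (u x) * u x

/-- Membership in the Nehari manifold `𝒩` (with the integrability conditions
making the functionals meaningful). -/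
def memNehari {d : ℕ} (f : ℝ → ℝ) (u : E d → ℝ) : Prop :=
  ¬ u =ᵐ[volume] (0 : E d → ℝ) ∧ Integrable (gradSq u) ∧
  Integrable (fun x => (u x) ^ 2) ∧ Integrable (fun x => Fprim f (u x)) ∧
  Integrable (fun x => f (u x) * u x) ∧ Ifun f u = 0

/-- Radial function. -/
def Radial {d : ℕ} (u : E d → ℝ) : Prop := ∃ v : ℝ → ℝ, ∀ x, u x = v ‖x‖

/-- Hypotheses (H1)-(H6) on the nonlinearity `f` (in dimension `d`). -/
def Hyps (d : ℕ) (f : ℝ → ℝ) : Prop :=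
  -- (H1) regularity: continuous and odd
  (Continuous f ∧ ∀ s, f (-s) = - f s) ∧
  -- (H2) subcriticality
  (∃ p C M : ℝ, 1 < p ∧ (d ≤ 2 ∨ p < 2 * (d:ℝ) / ((d:ℝ) - 2) - 1) ∧
    ∀ s, M ≤ |s| → |f s| ≤ C * |s| ^ p) ∧
  -- (H3) superlinearity at 0
  (Tendsto (fun s => f s / s) (nhdsWithin 0 {(0:ℝ)}ᶜ) (nhds 0)) ∧
  -- (H4) focusing
  (∃ ξ₀ > (0:ℝ), Fprim f ξ₀ > ξ₀ ^ 2 / 2) ∧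
  -- (H5) monotonicity of f(s)/s
  (StrictMonoOn (fun s => f s / s) (Set.Ioi (0:ℝ))) ∧
  -- (H6) Ambrosetti–Rabinowitz
  (∃ θ : ℝ, 2 < θ ∧ ∀ s > (0:ℝ), θ * Fprim f s < s * f s)

/-- Positive part. -/
def posPart' {d : ℕ} (u : E d → ℝ) : E d → ℝ := fun x => max (u x) 0

/-- Negative part. -/
def negPart' {d : ℕ} (u : E d → ℝ) : E d → ℝ := fun x => max (- u x) 0

/-! Since `f` is odd, `f(s a)(s a)/s² = a² · f(s|a|)/(s|a|)`, which is strictly increasing in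
`s > 0` whenever `a ≠ 0`. Integrating against `u ≠ 0`, the map `s ↦ s⁻² ∫ f(s u)(s u)` is
strictly increasing on `(0, ∞)`, while `I(s u) = 0` says exactly that it equals `‖u‖²_{H¹}`. -/

theorem integral_lt_integral_of_ae_le_of_measure_setOf_lt_ne_zero {α : Type*}
    [MeasurableSpace α] {μ : Measure α} {φ ψ : α → ℝ}
    (hφ : Integrable φ μ) (hψ : Integrable ψ μ) (hle : φ ≤ᵐ[μ] ψ)
    (hlt : μ {x | φ x < ψ x} ≠ 0) :
    ∫ x, φ x ∂μ < ∫ x, ψ x ∂μ := by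
  rw [← sub_pos, ← integral_sub hψ hφ, integral_pos_iff_support_of_nonneg_ae
    (hle.mono fun x => sub_nonneg.2) (hψ.sub hφ)]
  exact pos_iff_ne_zero.2 (mt (measure_mono_null fun x hx => (sub_pos.2 hx).ne') hlt)

lemma apply_mul_self_eq_apply_abs_mul_abs {f : ℝ → ℝ} (hf_odd : ∀ s, f (-s) = -f s) (a : ℝ) :
    f a * a = f |a| * |a| := by
  rcases abs_choice a with h | h <;> rw [h]
  rw [hf_odd, neg_mul_neg]

lemma strictMonoOn_apply_mul_mul_div_sq {f : ℝ → ℝ} (hf_odd : ∀ s, f (-s) = -f s)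
    (hf_mono : StrictMonoOn (fun s => f s / s) (Ioi 0)) {a : ℝ} (ha : a ≠ 0) :
    StrictMonoOn (fun s => f (s * a) * (s * a) / s ^ 2) (Ioi 0) := by
  have ha' : 0 < |a| := abs_pos.2 ha
  have hrewrite : ∀ s > (0 : ℝ),
      f (s * a) * (s * a) / s ^ 2 = f (s * |a|) / (s * |a|) * |a| ^ 2 := by
    intro s hs
    rw [apply_mul_self_eq_apply_abs_mul_abs hf_odd, abs_mul, abs_of_pos hs]
    field_simp
  intro s hs t ht hst
  simp only [hrewrite s hs, hrewrite t ht]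
  refine mul_lt_mul_of_pos_right (hf_mono ?_ ?_ ?_) (by positivity)
  · exact mul_pos hs ha'
  · exact mul_pos (mem_Ioi.1 ht) ha'
  · exact mul_lt_mul_of_pos_right hst ha'

theorem strictMonoOn_integral_apply_mul_mul_div_sq {α : Type*} [MeasurableSpace α]
    {μ : Measure α} {f : ℝ → ℝ} (hf_odd : ∀ s, f (-s) = -f s)
    (hf_mono : StrictMonoOn (fun s => f s / s) (Ioi 0))
    {u : α → ℝ} (hu : ¬ u =ᵐ[μ] 0)
    (hint : ∀ s > (0 : ℝ), Integrable (fun x => f (s * u x) * (s * u x)) μ) :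
    StrictMonoOn (fun s => (∫ x, f (s * u x) * (s * u x) ∂μ) / s ^ 2) (Ioi 0) := by
  intro s hs t ht hst
  simp only [← integral_div]
  refine integral_lt_integral_of_ae_le_of_measure_setOf_lt_ne_zero
    ((hint s hs).div_const _) ((hint t ht).div_const _) (Eventually.of_forall fun x => ?_) ?_
  · rcases eq_or_ne (u x) 0 with hx | hx
    · simp [hx]
    · exact (strictMonoOn_apply_mul_mul_div_sq hf_odd hf_mono hx hs ht hst).le
  · refine fun h0 => hu (measure_mono_null (fun x hx => ?_) h0)
    exact strictMonoOn_apply_mul_mul_div_sq hf_odd hf_mono hx hs ht hst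

theorem stmt_0_general {d : ℕ} (f : ℝ → ℝ)
    (hf_odd : ∀ s, f (-s) = - f s)
    (hf_mono : StrictMonoOn (fun s => f s / s) (Set.Ioi (0:ℝ)))
    (u : E d → ℝ) (hu : ¬ u =ᵐ[volume] (0 : E d → ℝ))
    (hint : ∀ s > (0:ℝ), Integrable (fun x => f (s * u x) * (s * u x))) :
    ∀ s₁ ∈ Set.Ioi (0:ℝ), ∀ s₂ ∈ Set.Ioi (0:ℝ),
      s₁ ^ 2 * H1normSq u - (∫ x, f (s₁ * u x) * (s₁ * u x)) = 0 →
      s₂ ^ 2 * H1normSq u - (∫ x, f (s₂ * u x) * (s₂ * u x)) = 0 →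
      s₁ = s₂ := by
  intro s₁ hs₁ s₂ hs₂ h₁ h₂
  have hnehari : ∀ s ∈ Ioi (0 : ℝ), s ^ 2 * H1normSq u - (∫ x, f (s * u x) * (s * u x)) = 0 →
      (∫ x, f (s * u x) * (s * u x)) / s ^ 2 = H1normSq u := fun s hs h =>
    div_eq_of_eq_mul (pow_ne_zero 2 (mem_Ioi.1 hs).ne') (by linear_combination -h)
  exact (strictMonoOn_integral_apply_mul_mul_div_sq hf_odd hf_mono hu hint).injOn hs₁ hs₂
    ((hnehari s₁ hs₁ h₁).trans (hnehari s₂ hs₂ h₂).symm)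

/-- for `f` continuous, odd, with `f(s)/s` strictly increasing on `(0,∞)`,
and `u ∈ H¹(ℝᵈ) \ {0}`, the Nehari functional
`I(su) = s²‖u‖²_{H¹} − ∫ f(su)·su dx` vanishes at most once for `s ∈ (0,∞)`. -/
theorem stmt_0 {d : ℕ} (f : ℝ → ℝ)
    (hf_cont : Continuous f) (hf_odd : ∀ s, f (-s) = - f s)
    (hf_mono : StrictMonoOn (fun s => f s / s) (Set.Ioi (0:ℝ)))
    (u : E d → ℝ) (hu : ¬ u =ᵐ[volume] (0 : E d → ℝ))
    (hgrad : Integrable (gradSq u)) (hL2 : Integrable (fun x => (u x) ^ 2))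
    (hint : ∀ s > (0:ℝ), Integrable (fun x => f (s * u x) * (s * u x))) :
    ∀ s₁ ∈ Set.Ioi (0:ℝ), ∀ s₂ ∈ Set.Ioi (0:ℝ),
      s₁ ^ 2 * H1normSq u - (∫ x, f (s₁ * u x) * (s₁ * u x)) = 0 →
      s₂ ^ 2 * H1normSq u - (∫ x, f (s₂ * u x) * (s₂ * u x)) = 0 →
      s₁ = s₂ :=
  stmt_0_general f hf_odd hf_mono u hu hint
end
end

section
/- Suppose f: ℝ → ℝ is continuous with F(s) = ∫₀^s f(t) dt satisfying θF(s) ≤ s f(s) for all s > 0 for some θ > 2, and F(s₀) > 0 for some s₀ > 0. Then F(s)/s² → ∞ as s → ∞. -/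
open MeasureTheory Real Set Filter

/-
The Ambrosetti–Rabinowitz condition `θ F ≤ s F'` says exactly that `s ↦ F(s) s^{-θ}` is
nondecreasing for `s > 0`. Starting from `F(s₀) > 0` this gives `F(s) ≥ c s^θ` with `c > 0`
for `s ≥ s₀`, and `θ > 2` makes `c s^{θ-2}` unbounded.
-/

section AmbrosettiRabinowitz

variable {F F' : ℝ → ℝ} {θ a : ℝ}

theorem hasDerivAt_mul_rpow_neg {s : ℝ} (hs : 0 < s) (hF : HasDerivAt F (F' s) s) :
    HasDerivAt (fun x => F x * x ^ (-θ)) (s ^ (-θ - 1) * (s * F' s - θ * F s)) s := by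
  have hpow : HasDerivAt (fun x : ℝ => x ^ (-θ)) (-θ * s ^ (-θ - 1)) s := by
    simpa using hasDerivAt_rpow_const (p := -θ) (Or.inl hs.ne')
  have hs1 : s ^ (-θ - 1) * s = s ^ (-θ) := by
    rw [← rpow_add_one hs.ne' (-θ - 1)]; ring_nf
  refine (hF.mul hpow).congr_deriv ?_
  linear_combination (-F' s) * hs1

theorem monotoneOn_mul_rpow_neg (ha : 0 < a) (hF : ∀ s ≥ a, HasDerivAt F (F' s) s)
    (hAR : ∀ s > a, θ * F s ≤ s * F' s) :
    MonotoneOn (fun s => F s * s ^ (-θ)) (Ici a) := by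
  have hderiv : ∀ s > a,
      HasDerivAt (fun x => F x * x ^ (-θ)) (s ^ (-θ - 1) * (s * F' s - θ * F s)) s :=
    fun s hs => hasDerivAt_mul_rpow_neg (ha.trans hs) (hF s hs.le)
  apply monotoneOn_of_deriv_nonneg (convex_Ici a)
  · intro s hs
    exact ((hF s hs).continuousAt.mul
      (continuousAt_rpow_const s (-θ) (Or.inl (ha.trans_le hs).ne'))).continuousWithinAt
  · rw [interior_Ici]
    exact fun s hs => (hderiv s hs).differentiableAt.differentiableWithinAt
  · rw [interior_Ici]
    intro s hs
    rw [(hderiv s hs).deriv]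
    exact mul_nonneg (rpow_nonneg (ha.trans hs).le _) (by linarith [hAR s hs])

theorem mul_rpow_le_of_le_mul_deriv (ha : 0 < a) (hF : ∀ s ≥ a, HasDerivAt F (F' s) s)
    (hAR : ∀ s > a, θ * F s ≤ s * F' s) {s : ℝ} (hs : a ≤ s) :
    F a * a ^ (-θ) * s ^ θ ≤ F s := by
  have hspos : 0 < s := ha.trans_le hs
  have hmono := monotoneOn_mul_rpow_neg ha hF hAR self_mem_Ici hs hs
  calc F a * a ^ (-θ) * s ^ θ ≤ F s * s ^ (-θ) * s ^ θ := by
        gcongr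
    _ = F s := by rw [mul_assoc, ← rpow_add hspos, neg_add_cancel, rpow_zero, mul_one]

end AmbrosettiRabinowitz

theorem tendsto_div_sq_atTop_of_rpow_le {g : ℝ → ℝ} {c θ : ℝ} (hc : 0 < c) (hθ : 2 < θ)
    (hg : ∀ᶠ s in atTop, c * s ^ θ ≤ g s) :
    Tendsto (fun s => g s / s ^ 2) atTop atTop := by
  have hgrowth : Tendsto (fun s : ℝ => c * s ^ (θ - 2)) atTop atTop :=
    (tendsto_rpow_atTop (by linarith)).const_mul_atTop hc
  refine tendsto_atTop_mono' atTop ?_ hgrowth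
  filter_upwards [hg, eventually_gt_atTop 0] with s hs hspos
  rw [le_div_iff₀ (by positivity), ← rpow_natCast, mul_assoc, ← rpow_add hspos]
  simpa using hs

/-- if `f` is continuous, `θ > 2` with `θF(s) ≤ s f(s)` for all `s > 0`
(`F(s) = ∫₀ˢ f`), and `F(s₀) > 0` for some `s₀ > 0`, then `F(s)/s² → ∞` as `s → ∞`. -/
theorem stmt_2 (f : ℝ → ℝ) (hf : Continuous f) (θ : ℝ) (hθ : 2 < θ)
    (hAR : ∀ s > (0:ℝ), θ * (∫ t in (0:ℝ)..s, f t) ≤ s * f s)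
    (h0 : ∃ s₀ > (0:ℝ), (∫ t in (0:ℝ)..s₀, f t) > 0) :
    Tendsto (fun s => (∫ t in (0:ℝ)..s, f t) / s ^ 2) atTop atTop := by
  obtain ⟨s₀, hs₀, hF₀⟩ := h0
  have hF : ∀ s ≥ s₀, HasDerivAt (fun u => ∫ t in (0:ℝ)..u, f t) (f s) s :=
    fun s _ => (hf.integral_hasStrictDerivAt 0 s).hasDerivAt
  refine tendsto_div_sq_atTop_of_rpow_le (mul_pos hF₀ (rpow_pos_of_pos hs₀ (-θ))) hθ ?_
  filter_upwards [eventually_ge_atTop s₀] with s hs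
  exact mul_rpow_le_of_le_mul_deriv hs₀ hF (fun s hs => hAR s (hs₀.trans hs)) hs
end

section
/- Under hypotheses (H1)–(H6) on f, for every u ∈ H¹(ℝᵈ) \ {0} there exists a unique s_u ∈ (0,∞) such that I(s_u u) = 0, and moreover S(s_u u) = max_{s>0} S(su) > 0. If I(u) < 0 then s_u < 1, and if I(u) > 0 then s_u > 1 and S(u) > 0. -/
open MeasureTheory Real Set Filter

noncomputable section

/-!
Write `q(t) = f(t)/t` and `A = ‖u‖²_{H¹}`. Oddness of `f` gives `f(su) su = s² q(s|u|) u²`, so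
`I(su) = s² (A - φ(s))` with `φ(s) = ∫ q(s|u|) u²`. By (H5) `φ` is strictly increasing on
`(0, ∞)`; it is continuous, tends to `0` as `s → 0⁺` by (H3) and dominated convergence, and is
unbounded because (H6) forces `q(t) → ∞`. Hence `φ(s) = A` has exactly one solution `s_u`, and the
sign of `I(u) = A - φ(1)` compares `1` with `s_u`. Since `F(x) - q(τ) x² / 2` is minimal at `x = τ`
for `x ≥ 0`, integrating along the fiber shows that `s_u` maximizes `S(su)`, and (H6) gives
`θ ∫ F(su) ≤ ∫ f(su) su`, whence `S(s_u u) > 0` and `S(u) > 0` when `I(u) > 0`.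
-/

open Topology

section Scalar

variable {f : ℝ → ℝ} {θ : ℝ}

lemma apply_zero_of_odd (hodd : ∀ s, f (-s) = -f s) : f 0 = 0 := by
  have h := hodd 0
  rw [neg_zero] at h
  linarith

lemma apply_mul_self_eq (hodd : ∀ s, f (-s) = -f s) (t : ℝ) :
    f t * t = f |t| / |t| * t ^ 2 := by
  rcases lt_trichotomy t 0 with h | rfl | h
  · rw [abs_of_neg h, hodd]
    field_simp
  · simp [apply_zero_of_odd hodd]
  · rw [abs_of_pos h]
    field_simp

lemma apply_mul_mul_self_eq (hodd : ∀ s, f (-s) = -f s) {s : ℝ} (hs : 0 < s) (t : ℝ) :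
    f (s * t) * (s * t) = s ^ 2 * (f (s * |t|) / (s * |t|) * t ^ 2) := by
  rw [apply_mul_self_eq hodd, abs_mul, abs_of_pos hs]
  ring

lemma apply_div_pos_of_strictMonoOn
    (hmono : StrictMonoOn (fun s => f s / s) (Ioi 0))
    (hlim : Tendsto (fun s => f s / s) (𝓝[>] 0) (𝓝 0)) {t : ℝ} (ht : 0 < t) :
    0 < f t / t := by
  have h_half : 0 ≤ f (t / 2) / (t / 2) := by
    refine le_of_tendsto hlim ?_
    filter_upwards [Ioo_mem_nhdsGT (half_pos ht)] with x hx
    exact (hmono hx.1 (half_pos ht) hx.2).le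
  exact h_half.trans_lt (hmono (half_pos ht) ht (half_lt_self ht))

lemma Fprim_neg (hodd : ∀ s, f (-s) = -f s) (t : ℝ) : Fprim f (-t) = Fprim f t := by
  have h := intervalIntegral.integral_comp_neg (a := 0) (b := t) f
  simp only [neg_zero, hodd, intervalIntegral.integral_neg] at h
  rw [Fprim, Fprim, intervalIntegral.integral_symm, ← h, neg_neg]

lemma Fprim_pos (hcont : Continuous f) (hpos : ∀ t > 0, 0 < f t) {t : ℝ} (ht : 0 < t) :
    0 < Fprim f t :=
  intervalIntegral.intervalIntegral_pos_of_pos_on (hcont.intervalIntegrable _ _)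
    (fun x hx => hpos x hx.1) ht

lemma hasDerivAt_Fprim (hcont : Continuous f) (t : ℝ) : HasDerivAt (Fprim f) (f t) t :=
  intervalIntegral.integral_hasDerivAt_right (hcont.intervalIntegrable _ _)
    hcont.stronglyMeasurable.stronglyMeasurableAtFilter hcont.continuousAt

lemma mul_Fprim_le_apply_mul (hodd : ∀ s, f (-s) = -f s)
    (hAR : ∀ s > 0, θ * Fprim f s < s * f s) (t : ℝ) : θ * Fprim f t ≤ f t * t := by
  rcases lt_trichotomy t 0 with h | rfl | h
  · have := hAR (-t) (neg_pos.mpr h)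
    rw [Fprim_neg hodd, hodd] at this
    linarith
  · simp [Fprim]
  · linarith [hAR t h]

/-- The Ambrosetti–Rabinowitz condition makes `F(s) s^{-θ}` nondecreasing, so `F` grows at least
like `s^θ` and `f(s)/s ≥ θ F(s)/s²` grows at least like `s^{θ-2}`. -/
lemma tendsto_apply_div_atTop (hcont : Continuous f) (hpos : ∀ t > 0, 0 < f t) (hθ : 2 < θ)
    (hAR : ∀ s > 0, θ * Fprim f s < s * f s) :
    Tendsto (fun s => f s / s) atTop atTop := by
  have hderiv : ∀ s > 0, HasDerivAt (fun s => Fprim f s * s ^ (-θ))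
      (s ^ (-θ) / s * (s * f s - θ * Fprim f s)) s := by
    intro s hs
    refine ((hasDerivAt_Fprim hcont s).mul
      (Real.hasDerivAt_rpow_const (p := -θ) (Or.inl hs.ne'))).congr_deriv ?_
    rw [Real.rpow_sub_one hs.ne']
    field_simp
    ring
  have hmono : MonotoneOn (fun s => Fprim f s * s ^ (-θ)) (Ici 1) := by
    have hs_pos : ∀ s ∈ Ici (1 : ℝ), 0 < s := fun s hs => zero_lt_one.trans_le hs
    refine monotoneOn_of_hasDerivWithinAt_nonneg (convex_Ici 1)
      (fun s hs => (hderiv s (hs_pos s hs)).continuousAt.continuousWithinAt)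
      (fun s hs => (hderiv s (hs_pos s (interior_subset hs))).hasDerivWithinAt) fun s hs => ?_
    have hs0 := hs_pos s (interior_subset hs)
    exact mul_nonneg (by positivity) (by linarith [hAR s hs0])
  have hF1 := Fprim_pos hcont hpos one_pos
  have hgrowth : Tendsto (fun s : ℝ => θ * Fprim f 1 * s ^ (θ - 2)) atTop atTop :=
    (tendsto_rpow_atTop (by linarith)).const_mul_atTop (by positivity)
  refine tendsto_atTop_mono' atTop ?_ hgrowth
  filter_upwards [eventually_ge_atTop 1] with s hs
  have hs0 : 0 < s := by linarith
  have hFs : Fprim f 1 ≤ Fprim f s * s ^ (-θ) := by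
    simpa using hmono self_mem_Ici hs hs
  rw [Real.rpow_neg hs0.le, ← div_eq_mul_inv, le_div_iff₀ (by positivity)] at hFs
  rw [Real.rpow_sub hs0, Real.rpow_two, le_div_iff₀ hs0]
  calc θ * Fprim f 1 * (s ^ θ / s ^ 2) * s = θ * (Fprim f 1 * s ^ θ) / s := by
        field_simp
    _ ≤ θ * Fprim f s / s := by gcongr
    _ ≤ f s := by
        rw [div_le_iff₀ hs0]
        linarith [hAR s hs0]

/-- `F(x) - q(τ) x² / 2`, with `q(s) = f(s)/s`, has derivative `x (q(x) - q(τ))` on `x > 0`,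
so it is minimal at `x = τ`. -/
lemma Fprim_sub_sq_le (hcont : Continuous f) (hmono : StrictMonoOn (fun s => f s / s) (Ioi 0))
    {τ x : ℝ} (hτ : 0 < τ) (hx : 0 ≤ x) :
    Fprim f τ - f τ / τ * τ ^ 2 / 2 ≤ Fprim f x - f τ / τ * x ^ 2 / 2 := by
  set K : ℝ → ℝ := fun y => Fprim f y - f τ / τ * y ^ 2 / 2
  have hK : ∀ y, HasDerivAt K (f y - f τ / τ * y) y := fun y => by
    refine ((hasDerivAt_Fprim hcont y).sub ((hasDerivAt_pow 2 y).const_mul (f τ / τ)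
      |>.div_const 2)).congr_deriv ?_
    ring
  have hK' : ∀ y > 0, f y - f τ / τ * y = y * (f y / y - f τ / τ) := fun y hy => by
    field_simp
  have hKcont : Continuous K := continuous_iff_continuousAt.mpr fun y => (hK y).continuousAt
  rcases le_total x τ with hxτ | hτx
  · refine antitoneOn_of_hasDerivWithinAt_nonpos (convex_Icc 0 τ) hKcont.continuousOn
      (fun y _ => (hK y).hasDerivWithinAt) (fun y hy => ?_) ⟨hx, hxτ⟩ ⟨hτ.le, le_rfl⟩ hxτ
    rw [interior_Icc] at hy
    rw [hK' y hy.1]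
    exact mul_nonpos_of_nonneg_of_nonpos hy.1.le (sub_nonpos.mpr (hmono hy.1 hτ hy.2).le)
  · refine monotoneOn_of_hasDerivWithinAt_nonneg (convex_Ici τ) hKcont.continuousOn
      (fun y _ => (hK y).hasDerivWithinAt) (fun y hy => ?_) self_mem_Ici hτx hτx
    rw [interior_Ici] at hy
    have hy0 : 0 < y := hτ.trans hy
    rw [hK' y hy0]
    exact mul_nonneg hy0.le (sub_nonneg.mpr (hmono hτ hy0 hy).le)

/-- Tangent-line inequality for the convex function `r ↦ F(√r)` at `r = τ²`. -/
lemma Fprim_add_le_Fprim_mul (hcont : Continuous f) (hodd : ∀ s, f (-s) = -f s)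
    (hmono : StrictMonoOn (fun s => f s / s) (Ioi 0)) (τ : ℝ) {c : ℝ} (hc : 0 ≤ c) :
    Fprim f τ + f τ * τ * (c ^ 2 - 1) / 2 ≤ Fprim f (c * τ) := by
  wlog hτ : 0 ≤ τ generalizing τ
  · have := this (-τ) (by linarith)
    rwa [Fprim_neg hodd, hodd, neg_mul_neg, mul_neg, Fprim_neg hodd] at this
  rcases hτ.eq_or_lt with rfl | hτ
  · simp [Fprim]
  have := Fprim_sub_sq_le hcont hmono hτ (mul_nonneg hc hτ.le)
  have hq : f τ * τ = f τ / τ * τ ^ 2 := by field_simp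
  rw [hq]
  nlinarith [this]

end Scalar

section FiberRatio

variable {α : Type*} [MeasurableSpace α] {μ : Measure α} {q : ℝ → ℝ} {u : α → ℝ}

/-- With `q t = f t / t` and `f` odd, `s² * fiberRatio q μ u s = ∫ f(s u) s u ∂μ`, so the Nehari
functional along the fiber is `I(s u) = s² (‖u‖² - fiberRatio q μ u s)`. -/
def fiberRatio (q : ℝ → ℝ) (μ : Measure α) (u : α → ℝ) (s : ℝ) : ℝ :=
  ∫ x, q (s * |u x|) * u x ^ 2 ∂μ

lemma mul_sq_nonneg_of_pos (hq_pos : ∀ t > 0, 0 < q t) {s : ℝ} (hs : 0 < s) (t : ℝ) :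
    0 ≤ q (s * |t|) * t ^ 2 := by
  rcases eq_or_ne t 0 with rfl | ht
  · simp
  · have := hq_pos (s * |t|) (by positivity)
    positivity

lemma mul_sq_le_mul_sq (hq : MonotoneOn q (Ioi 0)) {s₁ s₂ : ℝ} (h₁ : 0 < s₁) (h : s₁ ≤ s₂)
    (t : ℝ) : q (s₁ * |t|) * t ^ 2 ≤ q (s₂ * |t|) * t ^ 2 := by
  rcases eq_or_ne t 0 with rfl | ht
  · simp
  · have : 0 < |t| := abs_pos.mpr ht
    exact mul_le_mul_of_nonneg_right
      (hq (mem_Ioi.mpr (by positivity)) (mem_Ioi.mpr (by nlinarith)) (by gcongr)) (sq_nonneg t)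

lemma fiberRatio_strictMonoOn (hq : StrictMonoOn q (Ioi 0)) (hu : ¬u =ᵐ[μ] 0)
    (hint : ∀ s > 0, Integrable (fun x => q (s * |u x|) * u x ^ 2) μ) :
    StrictMonoOn (fiberRatio q μ u) (Ioi 0) := by
  intro s₁ h₁ s₂ h₂ h₁₂
  have h₁' : 0 < s₁ := h₁
  have hlt : ∀ t ≠ 0, q (s₁ * |t|) * t ^ 2 < q (s₂ * |t|) * t ^ 2 := fun t ht => by
    have : 0 < |t| := abs_pos.mpr ht
    exact mul_lt_mul_of_pos_right
      (hq (mem_Ioi.mpr (by positivity)) (mem_Ioi.mpr (by nlinarith)) (by gcongr)) (by positivity)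
  have hdiff := (hint s₂ h₂).sub (hint s₁ h₁)
  rw [← sub_pos, fiberRatio, fiberRatio, ← integral_sub (hint s₂ h₂) (hint s₁ h₁),
    integral_pos_iff_support_of_nonneg
      (fun x => sub_nonneg.mpr (mul_sq_le_mul_sq hq.monotoneOn h₁ h₁₂.le _)) hdiff]
  refine (pos_iff_ne_zero.mpr fun h => hu (ae_iff.mpr h)).trans_le (measure_mono fun x hx => ?_)
  exact (sub_pos.mpr (hlt _ hx)).ne'

lemma tendsto_fiberRatio_nhdsGT_zero (hq : MonotoneOn q (Ioi 0)) (hq_pos : ∀ t > 0, 0 < q t)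
    (hq0 : Tendsto q (𝓝[>] 0) (𝓝 0))
    (hint : ∀ s > 0, Integrable (fun x => q (s * |u x|) * u x ^ 2) μ) :
    Tendsto (fiberRatio q μ u) (𝓝[>] 0) (𝓝 0) := by
  have hlim := tendsto_integral_filter_of_dominated_convergence (μ := μ) (l := 𝓝[>] (0 : ℝ))
    (F := fun s x => q (s * |u x|) * u x ^ 2) (f := 0) (fun x => q (1 * |u x|) * u x ^ 2)
    (eventually_mem_nhdsWithin.mono fun s hs => (hint s hs).aestronglyMeasurable)
    (eventually_of_mem (Ioo_mem_nhdsGT one_pos) fun s hs => ae_of_all _ fun x => by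
      rw [Real.norm_of_nonneg (mul_sq_nonneg_of_pos hq_pos hs.1 _)]
      exact mul_sq_le_mul_sq hq hs.1 hs.2.le _)
    (hint 1 one_pos) (ae_of_all _ fun x => ?_)
  · simp only [Pi.zero_apply, integral_zero] at hlim
    exact hlim
  rcases eq_or_ne (u x) 0 with hx | hx
  · simp [hx]
  · have hscale : Tendsto (fun s => s * |u x|) (𝓝[>] 0) (𝓝[>] 0) :=
      tendsto_nhdsWithin_of_tendsto_nhds_of_eventually_within _
        (((continuous_mul_const _).tendsto' 0 0 (zero_mul _)).mono_left nhdsWithin_le_nhds)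
        (eventually_mem_nhdsWithin.mono fun s hs => mul_pos hs (abs_pos.mpr hx))
    simpa using (hq0.comp hscale).mul_const (u x ^ 2)

lemma fiberRatio_continuousOn (hq : MonotoneOn q (Ioi 0)) (hq_pos : ∀ t > 0, 0 < q t)
    (hqc : ContinuousOn q (Ioi 0))
    (hint : ∀ s > 0, Integrable (fun x => q (s * |u x|) * u x ^ 2) μ) :
    ContinuousOn (fiberRatio q μ u) (Ioi 0) := by
  intro s₀ hs₀
  have hs₀' : 0 < s₀ := hs₀
  refine (continuousAt_of_dominated (bound := fun x => q (2 * s₀ * |u x|) * u x ^ 2) ?_ ?_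
    (hint _ (by positivity)) (ae_of_all _ fun x => ?_)).continuousWithinAt
  · filter_upwards [Ioi_mem_nhds hs₀'] with s hs using (hint s hs).aestronglyMeasurable
  · filter_upwards [Ioo_mem_nhds (half_lt_self hs₀') (by linarith : s₀ < 2 * s₀)] with s hs
    refine ae_of_all _ fun x => ?_
    have hs0 : 0 < s := (half_pos hs₀').trans hs.1
    rw [Real.norm_of_nonneg (mul_sq_nonneg_of_pos hq_pos hs0 _)]
    exact mul_sq_le_mul_sq hq hs0 hs.2.le _
  · rcases eq_or_ne (u x) 0 with hx | hx
    · simp [hx, continuousAt_const]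
    · have : 0 < |u x| := abs_pos.mpr hx
      exact ((hqc.continuousAt (Ioi_mem_nhds (by positivity))).comp
        (continuous_mul_const _).continuousAt).mul continuousAt_const

lemma mul_sq_le_mul_sq_of_le_abs (hq : MonotoneOn q (Ioi 0)) (hq_pos : ∀ t > 0, 0 < q t)
    {s ε t : ℝ} (hs : 0 < s) (hε : 0 < ε) (h : ε ≤ |t|) :
    q (s * ε) * ε ^ 2 ≤ q (s * |t|) * t ^ 2 := by
  rw [← sq_abs t]
  exact mul_le_mul (hq (mem_Ioi.mpr (by positivity)) (mem_Ioi.mpr (by nlinarith)) (by gcongr))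
    (by gcongr) (sq_nonneg ε) (hq_pos _ (by nlinarith)).le

lemma exists_pos_measure_le_abs (hu : ¬u =ᵐ[μ] 0) : ∃ ε > 0, μ {x | ε ≤ |u x|} ≠ 0 := by
  by_contra! h
  refine hu (ae_iff.mpr ?_)
  have hunion : {x | ¬u x = (0 : α → ℝ) x} = ⋃ n : ℕ, {x | 1 / (n + 1 : ℝ) ≤ |u x|} := by
    ext x
    simp only [Pi.zero_apply, mem_ofPred_eq, mem_iUnion, ← abs_pos]
    exact ⟨fun hx => (exists_nat_one_div_lt hx).imp fun _ => le_of_lt,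
      fun ⟨n, hn⟩ => lt_of_lt_of_le (by positivity) hn⟩
  rw [hunion, measure_iUnion_null_iff]
  exact fun n => h _ (by positivity)

/-- Chebyshev's inequality on a level set `{ε ≤ |u|}` of positive finite measure, on which the
integrand of `fiberRatio q μ u (T / ε)` is at least `q(T) ε²`. -/
lemma exists_lt_fiberRatio (hq : MonotoneOn q (Ioi 0)) (hq_pos : ∀ t > 0, 0 < q t)
    (hq_top : Tendsto q atTop atTop) (hu : ¬u =ᵐ[μ] 0)
    (hint : ∀ s > 0, Integrable (fun x => q (s * |u x|) * u x ^ 2) μ) (K : ℝ) :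
    ∃ s > 0, K < fiberRatio q μ u s := by
  obtain ⟨ε, hε, hSpos⟩ := exists_pos_measure_le_abs hu
  have hsub : ∀ s > 0,
      {x | ε ≤ |u x|} ⊆ {x | q (s * ε) * ε ^ 2 ≤ q (s * |u x|) * u x ^ 2} :=
    fun s hs x hx => mul_sq_le_mul_sq_of_le_abs hq hq_pos hs hε hx
  have hfin : ∀ s > 0, μ {x | q (s * ε) * ε ^ 2 ≤ q (s * |u x|) * u x ^ 2} ≠ ⊤ := fun s hs =>
    ((hint s hs).measure_ge_lt_top (mul_pos (hq_pos _ (by positivity)) (by positivity))).ne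
  set m := μ.real {x | ε ≤ |u x|}
  have hm : 0 < m := ENNReal.toReal_pos hSpos (ne_top_of_le_ne_top (hfin 1 one_pos)
    (measure_mono (hsub 1 one_pos)))
  obtain ⟨T, hqT, hT⟩ :=
    ((hq_top.eventually_gt_atTop (K / (ε ^ 2 * m))).and (eventually_gt_atTop 0)).exists
  have hb : 0 < T / ε := by positivity
  have hlevel := measureReal_mono (hsub _ hb) (hfin _ hb)
  rw [div_mul_cancel₀ T hε.ne'] at hlevel
  refine ⟨T / ε, hb, ?_⟩
  calc K < q T * ε ^ 2 * m := by rwa [div_lt_iff₀ (by positivity), ← mul_assoc] at hqT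
    _ ≤ q T * ε ^ 2 * μ.real {x | q T * ε ^ 2 ≤ q (T / ε * |u x|) * u x ^ 2} := by
        have := hq_pos T hT
        gcongr
    _ ≤ fiberRatio q μ u (T / ε) :=
        mul_meas_ge_le_integral_of_nonneg (ae_of_all _ fun x => mul_sq_nonneg_of_pos hq_pos hb _)
          (hint _ hb) _

lemma exists_fiberRatio_eq (hq : StrictMonoOn q (Ioi 0)) (hq_pos : ∀ t > 0, 0 < q t)
    (hq0 : Tendsto q (𝓝[>] 0) (𝓝 0)) (hqc : ContinuousOn q (Ioi 0))
    (hq_top : Tendsto q atTop atTop) (hu : ¬u =ᵐ[μ] 0)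
    (hint : ∀ s > 0, Integrable (fun x => q (s * |u x|) * u x ^ 2) μ) {A : ℝ} (hA : 0 < A) :
    ∃ s > 0, fiberRatio q μ u s = A := by
  obtain ⟨a, haA, ha⟩ := (((tendsto_fiberRatio_nhdsGT_zero hq.monotoneOn hq_pos hq0
    hint).eventually (gt_mem_nhds hA)).and self_mem_nhdsWithin).exists
  obtain ⟨b, hb, hbA⟩ := exists_lt_fiberRatio hq.monotoneOn hq_pos hq_top hu hint A
  obtain ⟨s, hs, hsA⟩ := isPreconnected_Ioi.intermediate_value ha hb
    (fiberRatio_continuousOn hq.monotoneOn hq_pos hqc hint) ⟨haA.le, hbA.le⟩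
  exact ⟨s, hs, hsA⟩

end FiberRatio

section Nonlinearity

variable {α : Type*} [MeasurableSpace α] {μ : Measure α} {f : ℝ → ℝ} {u : α → ℝ} {s : ℝ}

lemma integral_apply_mul_eq_sq_mul_fiberRatio (hodd : ∀ s, f (-s) = -f s) (hs : 0 < s) :
    ∫ x, f (s * u x) * (s * u x) ∂μ = s ^ 2 * fiberRatio (fun t => f t / t) μ u s := by
  simp_rw [apply_mul_mul_self_eq hodd hs]
  exact integral_const_mul _ _

lemma integrable_apply_div_mul_sq (hodd : ∀ s, f (-s) = -f s) (hs : 0 < s)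
    (hint : Integrable (fun x => f (s * u x) * (s * u x)) μ) :
    Integrable (fun x => f (s * |u x|) / (s * |u x|) * u x ^ 2) μ := by
  simp_rw [apply_mul_mul_self_eq hodd hs] at hint
  exact (integrable_const_mul_iff (pow_pos hs 2).ne'.isUnit _).mp hint

lemma mul_integral_Fprim_le {θ : ℝ} (hodd : ∀ s, f (-s) = -f s)
    (hAR : ∀ s > 0, θ * Fprim f s < s * f s) {v : α → ℝ}
    (hF : Integrable (fun x => Fprim f (v x)) μ) (hf : Integrable (fun x => f (v x) * v x) μ) :
    θ * ∫ x, Fprim f (v x) ∂μ ≤ ∫ x, f (v x) * v x ∂μ := by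
  rw [← integral_const_mul]
  exact integral_mono (hF.const_mul θ) hf fun x => mul_Fprim_le_apply_mul hodd hAR (v x)

/-- A zero `s₀` of the Nehari functional along the fiber maximizes `s ↦ s² A / 2 - ∫ F(s u)`:
integrate `Fprim_add_le_Fprim_mul` with `τ = s₀ u`, `c = s / s₀`. -/
lemma half_sq_mul_sub_integral_Fprim_le (hcont : Continuous f) (hodd : ∀ s, f (-s) = -f s)
    (hmono : StrictMonoOn (fun s => f s / s) (Ioi 0)) {s₀ A : ℝ} (hs₀ : 0 < s₀) (hs : 0 < s)
    (hF : Integrable (fun x => Fprim f (s * u x)) μ)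
    (hF₀ : Integrable (fun x => Fprim f (s₀ * u x)) μ)
    (hf₀ : Integrable (fun x => f (s₀ * u x) * (s₀ * u x)) μ)
    (hA : ∫ x, f (s₀ * u x) * (s₀ * u x) ∂μ = s₀ ^ 2 * A) :
    s ^ 2 / 2 * A - ∫ x, Fprim f (s * u x) ∂μ ≤ s₀ ^ 2 / 2 * A - ∫ x, Fprim f (s₀ * u x) ∂μ := by
  have hpt : ∀ x, Fprim f (s₀ * u x) + f (s₀ * u x) * (s₀ * u x) * ((s / s₀) ^ 2 - 1) / 2
      ≤ Fprim f (s * u x) := fun x => by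
    simpa [← mul_assoc, div_mul_cancel₀ s hs₀.ne'] using
      Fprim_add_le_Fprim_mul hcont hodd hmono (s₀ * u x) (div_pos hs hs₀).le
  have hint := integral_mono (hF₀.add ((hf₀.mul_const _).div_const 2)) hF hpt
  rw [integral_add' hF₀ ((hf₀.mul_const _).div_const 2), integral_div, integral_mul_const, hA]
    at hint
  have hsq : s₀ ^ 2 * A * ((s / s₀) ^ 2 - 1) / 2 = (s ^ 2 - s₀ ^ 2) * A / 2 := by
    field_simp
  linarith

end Nonlinearity

lemma H1normSq_pos {d : ℕ} {u : E d → ℝ} (hu : ¬u =ᵐ[volume] 0)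
    (hL2 : Integrable fun x => u x ^ 2) : 0 < H1normSq u := by
  have hL2_pos : 0 < ∫ x, u x ^ 2 := by
    rw [integral_pos_iff_support_of_nonneg (fun x => sq_nonneg _) hL2]
    refine (pos_iff_ne_zero.mpr fun h => hu (ae_iff.mpr h)).trans_le (measure_mono fun x hx => ?_)
    exact pow_ne_zero 2 hx
  exact add_pos_of_nonneg_of_pos (integral_nonneg fun x => sq_nonneg _) hL2_pos

theorem stmt_3_general {d : ℕ} (f : ℝ → ℝ) (hf : Hyps d f)
    (u : E d → ℝ) (hu : ¬ u =ᵐ[volume] (0 : E d → ℝ))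
    (hL2 : Integrable (fun x => (u x) ^ 2))
    (hintF : ∀ s > (0:ℝ), Integrable (fun x => Fprim f (s * u x)))
    (hintf : ∀ s > (0:ℝ), Integrable (fun x => f (s * u x) * (s * u x))) :
    ∃ su ∈ Set.Ioi (0:ℝ),
      (su ^ 2 * H1normSq u - (∫ x, f (su * u x) * (su * u x)) = 0) ∧
      (∀ s ∈ Set.Ioi (0:ℝ),
        s ^ 2 * H1normSq u - (∫ x, f (s * u x) * (s * u x)) = 0 → s = su) ∧
      (∀ s ∈ Set.Ioi (0:ℝ),
        s ^ 2 / 2 * H1normSq u - (∫ x, Fprim f (s * u x)) ≤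
          su ^ 2 / 2 * H1normSq u - ∫ x, Fprim f (su * u x)) ∧
      (0 < su ^ 2 / 2 * H1normSq u - ∫ x, Fprim f (su * u x)) ∧
      (Ifun f u < 0 → su < 1) ∧
      (0 < Ifun f u → 1 < su ∧ 0 < Sfun f u) := by
  obtain ⟨⟨hcont, hodd⟩, -, hlim, -, hmono, θ, hθ, hAR⟩ := hf
  have hq0 := hlim.mono_left (nhdsGT_le_nhdsNE 0)
  have hq_pos : ∀ t > 0, 0 < f t / t := fun t ht => apply_div_pos_of_strictMonoOn hmono hq0 ht
  have hq_top := tendsto_apply_div_atTop hcont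
    (fun t ht => by simpa [ht.ne'] using mul_pos (hq_pos t ht) ht) hθ hAR
  have hint := fun s (hs : 0 < s) => integrable_apply_div_mul_sq hodd hs (hintf s hs)
  set A := H1normSq u
  set φ := fiberRatio (fun t => f t / t) volume u
  have hA : 0 < A := H1normSq_pos hu hL2
  have hφ : StrictMonoOn φ (Ioi 0) := fiberRatio_strictMonoOn hmono hu hint
  have hG : ∀ s > 0, ∫ x, f (s * u x) * (s * u x) = s ^ 2 * φ s :=
    fun s hs => integral_apply_mul_eq_sq_mul_fiberRatio hodd hs
  have hAR_int : ∀ s > 0, θ * ∫ x, Fprim f (s * u x) ≤ s ^ 2 * φ s :=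
    fun s hs => hG s hs ▸ mul_integral_Fprim_le hodd hAR (hintF s hs) (hintf s hs)
  obtain ⟨su, hsu, hφsu⟩ : ∃ su > 0, φ su = A := exists_fiberRatio_eq hmono hq_pos hq0
    (hcont.continuousOn.div continuousOn_id fun x hx => ne_of_gt hx) hq_top hu hint hA
  have hI : Ifun f u = A - φ 1 := by
    have h1 := hG 1 one_pos
    simp only [one_mul, one_pow] at h1
    rw [Ifun, h1]
  refine ⟨su, hsu, by rw [hG su hsu, hφsu, sub_self], fun s hs h => ?_, fun s hs => ?_, ?_,
    fun h => ?_, fun h => ⟨?_, ?_⟩⟩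
  · rw [hG s hs, ← mul_sub, mul_eq_zero, sub_eq_zero] at h
    exact hφ.injOn hs hsu (h.resolve_left (pow_ne_zero 2 (ne_of_gt hs)) ▸ hφsu.symm)
  · exact half_sq_mul_sub_integral_Fprim_le hcont hodd hmono hsu hs (hintF s hs) (hintF su hsu)
      (hintf su hsu) (by rw [hG su hsu, hφsu])
  · have hΦsu := hAR_int su hsu
    rw [hφsu] at hΦsu
    nlinarith [mul_pos (pow_pos hsu 2) hA]
  · exact (hφ.lt_iff_lt hsu (mem_Ioi.mpr one_pos)).mp (by linarith)
  · exact (hφ.lt_iff_lt (mem_Ioi.mpr one_pos) hsu).mp (by linarith)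
  · have hΦ1 := hAR_int 1 one_pos
    simp only [one_mul, one_pow] at hΦ1
    rw [Sfun]
    nlinarith

/-- under (H1)–(H6), for every `u ∈ H¹(ℝᵈ) \ {0}` there is a unique
`s_u ∈ (0,∞)` with `I(s_u u) = 0`; moreover `S(s_u u) = max_{s>0} S(su) > 0`;
if `I(u) < 0` then `s_u < 1`, and if `I(u) > 0` then `s_u > 1` and `S(u) > 0`.
Here `S(su) = s²/2·‖u‖²_{H¹} − ∫ F(su)` and `I(su) = s²‖u‖²_{H¹} − ∫ f(su)·su`. -/
theorem stmt_3 {d : ℕ} (f : ℝ → ℝ) (hf : Hyps d f)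
    (u : E d → ℝ) (hu : ¬ u =ᵐ[volume] (0 : E d → ℝ))
    (hgrad : Integrable (gradSq u)) (hL2 : Integrable (fun x => (u x) ^ 2))
    (hintF : ∀ s > (0:ℝ), Integrable (fun x => Fprim f (s * u x)))
    (hintf : ∀ s > (0:ℝ), Integrable (fun x => f (s * u x) * (s * u x))) :
    ∃ su ∈ Set.Ioi (0:ℝ),
      (su ^ 2 * H1normSq u - (∫ x, f (su * u x) * (su * u x)) = 0) ∧
      (∀ s ∈ Set.Ioi (0:ℝ),
        s ^ 2 * H1normSq u - (∫ x, f (s * u x) * (s * u x)) = 0 → s = su) ∧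
      (∀ s ∈ Set.Ioi (0:ℝ),
        s ^ 2 / 2 * H1normSq u - (∫ x, Fprim f (s * u x)) ≤
          su ^ 2 / 2 * H1normSq u - ∫ x, Fprim f (su * u x)) ∧
      (0 < su ^ 2 / 2 * H1normSq u - ∫ x, Fprim f (su * u x)) ∧
      (Ifun f u < 0 → su < 1) ∧
      (0 < Ifun f u → 1 < su ∧ 0 < Sfun f u) :=
  stmt_3_general f hf u hu hL2 hintF hintf
end
end
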